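/- arXiv:2012.04076 — 2 statements merged into one kernel-verified Lean document; each statement's English description precedes it below -/
import Mathlib

section
/- Fix an integer K ≥ 1 and an integer 1 ≤ j ≤ K. For a real number d, the following four conditions are equivalent: (i) d/2 − 1/(2K) = sinh(ᾱ_{j−1}·E)·sinh(a_j·E)·sinh(α̲_j·E); (ii) 1 − j/K − d/2 + 1/(2K) = cosh(ᾱ_{j−1}·E)·cosh(a_j·E)·sinh(α̲_j·E); (iii) d/2 + 1/(2K) = cosh(ᾱ_{j−1}·E)·sinh(a_j·E)·cosh(α̲_j·E); (iv) j/K − d/2 − 1/(2K) = sinh(ᾱ_{j−1}·E)·cosh(a_j·E)·cosh(α̲_j·E). Moreover, any real d satisfying (i) equals sinh(a_j·E)·cosh((1−a_j)·E). -/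
open Real Finset

/-- The ground-state energy `E = log(1+√2) = arcsinh(1)`, so that `sinh E = 1`. -/
noncomputable def groundE : ℝ := Real.log (1 + Real.sqrt 2)

/-- `ᾱ_i = (1/2)·(1 + arsinh(2i/K − 1)/E)` for `0 ≤ i ≤ K`. -/
noncomputable def abar (K i : ℕ) : ℝ :=
  (1 / 2) * (1 + Real.arsinh (2 * (i : ℝ) / (K : ℝ) - 1) / groundE)

/-- `a_i = ᾱ_i − ᾱ_{i−1}` for `1 ≤ i ≤ K`. -/
noncomputable def aseq (K i : ℕ) : ℝ := abar K i - abar K (i - 1)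

/-- `α̲_i = 1 − ᾱ_i`. -/
noncomputable def aund (K i : ℕ) : ℝ := 1 - abar K i

/-!
Put `x = ᾱ_{j-1} E`, `y = a_j E`, `z = α̲_j E`. Then `x + y + z = E`, while `x + y - z` and
`x - y - z` are of the form `2 ᾱ_i E - E = arsinh (2i/K - 1)`, so all three have explicit `sinh`.
By the product-to-sum formulas each of the triple products in (ii)–(iv) is an affine expression
in these three values of `sinh`, minus or plus `S = sinh x sinh y sinh z`, the right side of (i);
so each relation is (i) after cancellation. Finally `sinh (a_j E) cosh ((1 - a_j) E)` is
`sinh y cosh (x + z)`, the sum of the right sides of (i) and (iii).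
-/

namespace Real

theorem cosh_mul_cosh_mul_sinh (x y z : ℝ) :
    cosh x * cosh y * sinh z =
      (sinh (x + y + z) - sinh (x + y - z)) / 2 - sinh x * sinh y * sinh z := by
  simp only [sinh_add, sinh_sub, cosh_add]
  ring

theorem cosh_mul_sinh_mul_cosh (x y z : ℝ) :
    cosh x * sinh y * cosh z =
      (sinh (x + y - z) - sinh (x - y - z)) / 2 + sinh x * sinh y * sinh z := by
  simp only [sinh_add, sinh_sub, cosh_add, cosh_sub]
  ring

theorem sinh_mul_cosh_mul_cosh (x y z : ℝ) :
    sinh x * cosh y * cosh z =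
      (sinh (x + y + z) + sinh (x - y - z)) / 2 - sinh x * sinh y * sinh z := by
  simp only [sinh_add, sinh_sub, cosh_add, cosh_sub]
  ring

end Real

theorem sinh_groundE : sinh groundE = 1 := by
  have h : groundE = arsinh 1 := by
    rw [groundE, arsinh]
    norm_num
  rw [h, sinh_arsinh]

theorem sinh_two_mul_abar_mul_groundE_sub (K i : ℕ) :
    sinh (2 * (abar K i * groundE) - groundE) = 2 * (i : ℝ) / K - 1 := by
  have hE : groundE ≠ 0 := fun h => by simpa [h] using sinh_groundE
  rw [abar]
  field_simp
  rw [add_sub_cancel_left, sinh_arsinh]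

theorem optimal_d_equivalences_general (K : ℕ) (j : ℕ) (hj1 : 1 ≤ j) (d : ℝ) :
    ((d / 2 - 1 / (2 * (K : ℝ)) =
        Real.sinh (abar K (j - 1) * groundE) * Real.sinh (aseq K j * groundE) *
          Real.sinh (aund K j * groundE)) ↔
      (1 - (j : ℝ) / (K : ℝ) - d / 2 + 1 / (2 * (K : ℝ)) =
        Real.cosh (abar K (j - 1) * groundE) * Real.cosh (aseq K j * groundE) *
          Real.sinh (aund K j * groundE))) ∧
    ((d / 2 - 1 / (2 * (K : ℝ)) =
        Real.sinh (abar K (j - 1) * groundE) * Real.sinh (aseq K j * groundE) *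
          Real.sinh (aund K j * groundE)) ↔
      (d / 2 + 1 / (2 * (K : ℝ)) =
        Real.cosh (abar K (j - 1) * groundE) * Real.sinh (aseq K j * groundE) *
          Real.cosh (aund K j * groundE))) ∧
    ((d / 2 - 1 / (2 * (K : ℝ)) =
        Real.sinh (abar K (j - 1) * groundE) * Real.sinh (aseq K j * groundE) *
          Real.sinh (aund K j * groundE)) ↔
      ((j : ℝ) / (K : ℝ) - d / 2 - 1 / (2 * (K : ℝ)) =
        Real.sinh (abar K (j - 1) * groundE) * Real.cosh (aseq K j * groundE) *
          Real.cosh (aund K j * groundE))) ∧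
    ((d / 2 - 1 / (2 * (K : ℝ)) =
        Real.sinh (abar K (j - 1) * groundE) * Real.sinh (aseq K j * groundE) *
          Real.sinh (aund K j * groundE)) →
      d = Real.sinh (aseq K j * groundE) * Real.cosh ((1 - aseq K j) * groundE)) := by
  set x := abar K (j - 1) * groundE
  set y := aseq K j * groundE
  set z := aund K j * groundE
  have hE : sinh (x + y + z) = 1 := by
    rw [show x + y + z = groundE by simp only [x, y, z, aseq, aund]; ring, sinh_groundE]
  have hj : sinh (x + y - z) = 2 * (j : ℝ) / K - 1 := by
    rw [← sinh_two_mul_abar_mul_groundE_sub K j]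
    congr 1
    simp only [x, y, z, aseq, aund]
    ring
  have hj' : sinh (x - y - z) = 2 * ((j : ℝ) - 1) / K - 1 := by
    rw [← Nat.cast_pred hj1, ← sinh_two_mul_abar_mul_groundE_sub K (j - 1)]
    congr 1
    simp only [x, y, z, aseq, aund]
    ring
  have hd : sinh y * cosh ((1 - aseq K j) * groundE) =
      cosh x * sinh y * cosh z + sinh x * sinh y * sinh z := by
    rw [show (1 - aseq K j) * groundE = x + z by simp only [x, z, aund, aseq]; ring, cosh_add]
    ring
  rw [hd, cosh_mul_cosh_mul_sinh, cosh_mul_sinh_mul_cosh, sinh_mul_cosh_mul_cosh, hE, hj, hj']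
  exact ⟨⟨fun h => by linear_combination -h, fun h => by linear_combination -h⟩,
    ⟨fun h => by linear_combination h, fun h => by linear_combination h⟩,
    ⟨fun h => by linear_combination -h, fun h => by linear_combination -h⟩,
    fun h => by linear_combination 2 * h⟩

/-- **Lemma 3.2**: the four relations for the optimal Hamming distance `d` are all equivalent,
and any `d` satisfying them equals `sinh(a_j·E)·cosh((1−a_j)·E)`. -/
theorem optimal_d_equivalences (K : ℕ) (hK : 1 ≤ K) (j : ℕ) (hj1 : 1 ≤ j) (hjK : j ≤ K)
    (d : ℝ) :
    ((d / 2 - 1 / (2 * (K : ℝ)) =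
        Real.sinh (abar K (j - 1) * groundE) * Real.sinh (aseq K j * groundE) *
          Real.sinh (aund K j * groundE)) ↔
      (1 - (j : ℝ) / (K : ℝ) - d / 2 + 1 / (2 * (K : ℝ)) =
        Real.cosh (abar K (j - 1) * groundE) * Real.cosh (aseq K j * groundE) *
          Real.sinh (aund K j * groundE))) ∧
    ((d / 2 - 1 / (2 * (K : ℝ)) =
        Real.sinh (abar K (j - 1) * groundE) * Real.sinh (aseq K j * groundE) *
          Real.sinh (aund K j * groundE)) ↔
      (d / 2 + 1 / (2 * (K : ℝ)) =
        Real.cosh (abar K (j - 1) * groundE) * Real.sinh (aseq K j * groundE) *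
          Real.cosh (aund K j * groundE))) ∧
    ((d / 2 - 1 / (2 * (K : ℝ)) =
        Real.sinh (abar K (j - 1) * groundE) * Real.sinh (aseq K j * groundE) *
          Real.sinh (aund K j * groundE)) ↔
      ((j : ℝ) / (K : ℝ) - d / 2 - 1 / (2 * (K : ℝ)) =
        Real.sinh (abar K (j - 1) * groundE) * Real.cosh (aseq K j * groundE) *
          Real.cosh (aund K j * groundE))) ∧
    ((d / 2 - 1 / (2 * (K : ℝ)) =
        Real.sinh (abar K (j - 1) * groundE) * Real.sinh (aseq K j * groundE) *
          Real.sinh (aund K j * groundE)) →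
      d = Real.sinh (aseq K j * groundE) * Real.cosh ((1 - aseq K j) * groundE)) :=
  optimal_d_equivalences_general K j hj1 d
end

section
/- Fix an integer K ≥ 1. Then for every integer 1 ≤ i ≤ K: sinh(ᾱ_{i−1}·E) · sinh(a_i·E) · sinh((1−ᾱ_i)·E) ≤ 1/(2K). -/
lemma groundE_eq : groundE = Real.arsinh 1 := by
  rw [Real.arsinh, groundE]
  norm_num

lemma groundE_pos : 0 < groundE := by
  rw [groundE_eq, ← Real.arsinh_zero]
  exact Real.arsinh_lt_arsinh.2 one_pos

/-- Abstract core inequality. -/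
lemma key_ineq (A B C : ℝ) (hA : 0 ≤ A) (hB : 0 ≤ B) (hC : 0 ≤ C)
    (hsum : A + B + C = Real.arsinh 1) :
    Real.sinh A * Real.sinh B * Real.sinh C ≤
      (1 / 2) * (Real.sinh B * Real.cosh (A - C)) := by
  have hAC : Real.sinh A * Real.sinh C
      = (Real.cosh (A + C) - Real.cosh (A - C)) / 2 := by
    rw [Real.cosh_add, Real.cosh_sub]; ring
  have hB0 : 0 ≤ Real.sinh B := Real.sinh_nonneg_iff.2 hB
  have h1 : Real.cosh (A + C) ≤ Real.sqrt 2 := by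
    have : Real.cosh (A + C) ≤ Real.cosh (Real.arsinh 1) := by
      rw [Real.cosh_le_cosh]
      rw [abs_of_nonneg (by linarith), abs_of_nonneg (Real.arsinh_nonneg_iff.2 zero_le_one)]
      linarith
    rwa [Real.cosh_arsinh, show (1:ℝ) + 1 ^ 2 = 2 by norm_num] at this
  have h2 : Real.sqrt 2 ≤ 2 := by
    nlinarith [Real.sq_sqrt (by norm_num : (2:ℝ) ≥ 0), Real.sqrt_nonneg 2]
  have h3 : 1 ≤ Real.cosh (A - C) := Real.one_le_cosh _
  nlinarith [mul_le_mul_of_nonneg_left (h1.trans h2) hB0,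
    mul_le_mul_of_nonneg_left h3 hB0]

/-- The fraction of effective backsteps between consecutive coarse-graining hyperplanes is at
most `1/(2K)`: for `1 ≤ i ≤ K`,
`sinh(ᾱ_{i−1}·E) · sinh(a_i·E) · sinh((1−ᾱ_i)·E) ≤ 1/(2K)`. -/
theorem effective_backsteps_bound (K : ℕ) (hK : 1 ≤ K) (i : ℕ) (hi1 : 1 ≤ i) (hiK : i ≤ K) :
    Real.sinh (abar K (i - 1) * groundE) * Real.sinh (aseq K i * groundE) *
        Real.sinh ((1 - abar K i) * groundE) ≤ 1 / (2 * (K : ℝ)) := by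
  have hE := groundE_pos
  have hEne : groundE ≠ 0 := ne_of_gt hE
  have hKpos : (0:ℝ) < K := by exact_mod_cast hK
  have hipos : (1:ℝ) ≤ i := by exact_mod_cast hi1
  have hiK' : (i:ℝ) ≤ K := by exact_mod_cast hiK
  have hcast : ((i - 1 : ℕ) : ℝ) = (i : ℝ) - 1 := by
    have := Nat.cast_sub hi1 (R := ℝ); simpa using this
  set p : ℝ := Real.arsinh (2 * ((i:ℝ) - 1) / (K : ℝ) - 1) with hp
  set q : ℝ := Real.arsinh (2 * (i : ℝ) / (K : ℝ) - 1) with hq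
  -- bounds on p, q
  have hpq : p ≤ q := Real.arsinh_le_arsinh.2 (by
    have h0 : 2 * ((i:ℝ) - 1) / K ≤ 2 * (i:ℝ) / K := by
      apply div_le_div_of_nonneg_right ?_ hKpos.le |>.trans_eq rfl
      linarith
    linarith)
  have hplow : -Real.arsinh 1 ≤ p := by
    rw [← Real.arsinh_neg]
    apply Real.arsinh_le_arsinh.2
    have h0 : 0 ≤ 2 * ((i:ℝ) - 1) / K := by
      apply div_nonneg _ hKpos.le; linarith
    linarith
  have hqhigh : q ≤ Real.arsinh 1 := by
    apply Real.arsinh_le_arsinh.2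
    rw [sub_le_iff_le_add]
    rw [div_le_iff₀ hKpos]
    linarith
  -- rewrite the three arguments
  have e1 : abar K (i - 1) * groundE = (groundE + p) / 2 := by
    rw [abar, hcast, ← hp]; field_simp
  have e2 : aseq K i * groundE = (q - p) / 2 := by
    rw [aseq, abar, abar, hcast, ← hp, ← hq]; field_simp; ring
  have e3 : (1 - abar K i) * groundE = (groundE - q) / 2 := by
    rw [abar, ← hq]; field_simp; ring
  rw [e1, e2, e3]
  set A := (groundE + p) / 2 with hA
  set B := (q - p) / 2 with hB
  set C := (groundE - q) / 2 with hC
  have hAnn : 0 ≤ A := by rw [hA, groundE_eq]; linarith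
  have hBnn : 0 ≤ B := by rw [hB]; linarith
  have hCnn : 0 ≤ C := by rw [hC, groundE_eq]; linarith
  have hsum : A + B + C = Real.arsinh 1 := by
    rw [hA, hB, hC, groundE_eq]; ring
  have hkey := key_ineq A B C hAnn hBnn hCnn hsum
  -- identity: 2 * sinh B * cosh (A - C) = sinh q - sinh p = 2 / K
  have hid : Real.sinh B * Real.cosh (A - C) = 1 / (K : ℝ) := by
    have hAC : A - C = (q + p) / 2 := by rw [hA, hC]; ring
    have h2 : Real.sinh q - Real.sinh p
        = 2 * Real.sinh ((q - p) / 2) * Real.cosh ((q + p) / 2) := by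
      have hq' : q = (q + p) / 2 + (q - p) / 2 := by ring
      have hp' : p = (q + p) / 2 - (q - p) / 2 := by ring
      rw [hq', hp', Real.sinh_add, Real.sinh_sub]
      ring
    have hsq : Real.sinh q = 2 * (i : ℝ) / (K : ℝ) - 1 := Real.sinh_arsinh _
    have hsp : Real.sinh p = 2 * ((i:ℝ) - 1) / (K : ℝ) - 1 := Real.sinh_arsinh _
    rw [hB, hAC]
    rw [hsq, hsp] at h2
    field_simp at h2 ⊢
    linarith
  calc Real.sinh A * Real.sinh B * Real.sinh C
      ≤ (1 / 2) * (Real.sinh B * Real.cosh (A - C)) := hkey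
    _ = 1 / (2 * (K : ℝ)) := by rw [hid]; field_simp
end
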